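/- arXiv:1702.02220 — 3 statements merged into one kernel-verified Lean document; each statement's English description precedes it below -/
import Mathlib

section
/- Let ψ : [0,∞) → ℝ be differentiable, let U ∈ U(N) be unitary, and let A ∈ M_N(ℂ) be anti-hermitian. Then the derivative at t = 0 of f(t) = Σ_{i,j} ψ(|(U·exp(tA))_{ij}|²) equals f'(0) = 2·Σ_{r>0} r·ψ'(r²)·Re[Tr(U_r*·U·A)], where the sum runs over the (finitely many) values r > 0 occurring as moduli |U_{ij}| of entries of U. -/
open scoped Matrix

/-- the sign `sgn(z) = z/|z|` of a complex number (with `sgn 0 = 0`). -/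
noncomputable def csgn (z : ℂ) : ℂ := z / (‖z‖ : ℂ)

/-- the color component `U_r` of a matrix `U`. -/
noncomputable def colorComp {n : Type*} (U : Matrix n n ℂ) (r : ℝ) :
    Matrix n n ℂ :=
  Matrix.of fun i j => if ‖U i j‖ = r then csgn (U i j) else 0

/-!
At `t = 0` the entries of `U * exp (t • A)` move with velocity `U * A`, so by the chain rule
entry `(i, j)` contributes `ψ'(|U i j|²) * 2 Re(conj (U i j) * (U * A) i j)`. Since
`U i j = |U i j| * sgn (U i j)`, the matrix `∑ r, r ψ'(r²) U_r` is `(ψ'(|U i j|²) U i j)`,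
and `Re Tr (Bᴴ * C)` is the real Frobenius inner product of `B` and `C`.
-/

open scoped RealInnerProductSpace

theorem norm_mul_csgn (z : ℂ) : (‖z‖ : ℂ) * csgn z = z := by
  rcases eq_or_ne z 0 with rfl | hz
  · simp [csgn]
  · exact mul_div_cancel₀ z (by simpa using hz)

section ColorDecomposition

variable {n : Type*}

theorem sum_smul_colorComp (U : Matrix n n ℂ) (g : ℝ → ℝ) {F : Finset ℝ}
    (hF : ∀ i j, U i j ≠ 0 → ‖U i j‖ ∈ F) :
    ∑ r ∈ F, (r * g r) • colorComp U r = Matrix.of fun i j => g ‖U i j‖ • U i j := by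
  ext i j
  simp only [Matrix.sum_apply, Matrix.smul_apply, colorComp, Matrix.of_apply, smul_ite,
    smul_zero, Finset.sum_ite_eq]
  rcases eq_or_ne (U i j) 0 with h | h
  · simp [h, csgn]
  · rw [if_pos (hF i j h), Complex.real_smul, Complex.real_smul, Complex.ofReal_mul,
      mul_comm (‖U i j‖ : ℂ), mul_assoc, norm_mul_csgn]

theorem re_trace_conjTranspose_mul [Fintype n] (B C : Matrix n n ℂ) :
    (Bᴴ * C).trace.re = ∑ i, ∑ j, ⟪B i j, C i j⟫ := by
  simp only [Matrix.trace, Matrix.diag_apply, Matrix.mul_apply, Matrix.conjTranspose_apply,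
    Complex.re_sum, Complex.inner, mul_comm (C _ _)]
  exact Finset.sum_comm

theorem sum_mul_re_trace_conjTranspose_mul [Fintype n] {ι : Type*} (s : Finset ι) (c : ι → ℝ)
    (B : ι → Matrix n n ℂ) (C : Matrix n n ℂ) :
    ∑ k ∈ s, c k * ((B k)ᴴ * C).trace.re = ((∑ k ∈ s, c k • B k)ᴴ * C).trace.re := by
  simp [Matrix.conjTranspose_sum, Finset.sum_mul, Matrix.trace_sum, Complex.re_sum]

theorem sum_mul_re_trace_colorComp [Fintype n] (U C : Matrix n n ℂ) (g : ℝ → ℝ) {F : Finset ℝ}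
    (hF : ∀ i j, U i j ≠ 0 → ‖U i j‖ ∈ F) :
    ∑ r ∈ F, r * g r * ((colorComp U r)ᴴ * C).trace.re =
      ∑ i, ∑ j, g ‖U i j‖ * ⟪U i j, C i j⟫ := by
  rw [sum_mul_re_trace_conjTranspose_mul, sum_smul_colorComp U g hF,
    re_trace_conjTranspose_mul]
  simp only [Matrix.of_apply, real_inner_smul_left]

end ColorDecomposition

section Derivative

-- Any Banach-algebra norm on matrices will do: the statement itself involves none.
attribute [local instance] Matrix.linftyOpNormedRing Matrix.linftyOpNormedAlgebra

theorem hasDerivAt_mul_exp_smul_apply {n : Type*} [Fintype n] [DecidableEq n]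
    (U A : Matrix n n ℂ) (i j : n) :
    HasDerivAt (fun t : ℝ => (U * NormedSpace.exp (t • A)) i j) ((U * A) i j) 0 := by
  have hexp := hasDerivAt_exp_smul_const (𝕂 := ℝ) A 0
  rw [zero_smul, NormedSpace.exp_zero, Matrix.one_mul] at hexp
  exact (Matrix.entryLinearMap ℝ ℂ i j).toContinuousLinearMap.hasFDerivAt.comp_hasDerivAt 0
    (hexp.const_mul U)

end Derivative

theorem DifferentiableOn.hasDerivAt_comp_norm_sq {E : Type*} [NormedAddCommGroup E]
    [InnerProductSpace ℝ E] {ψ : ℝ → ℝ} (hψ : DifferentiableOn ℝ ψ (Set.Ici 0))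
    {f : ℝ → E} {f' : E} {x : ℝ} (hf : HasDerivAt f f' x) :
    HasDerivAt (fun t => ψ (‖f t‖ ^ 2))
      (derivWithin ψ (Set.Ici 0) (‖f x‖ ^ 2) * (2 * ⟪f x, f'⟫)) x :=
  (hψ (‖f x‖ ^ 2) (Set.mem_Ici.2 (sq_nonneg _))).hasDerivWithinAt.comp_hasDerivAt x hf.norm_sq
    (.of_forall fun _ => Set.mem_Ici.2 (sq_nonneg _))

theorem stmt8_general (N : ℕ) (ψ : ℝ → ℝ) (hψ : DifferentiableOn ℝ ψ (Set.Ici 0))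
    (U : Matrix (Fin N) (Fin N) ℂ)
    (A : Matrix (Fin N) (Fin N) ℂ) :
    HasDerivAt
      (fun t : ℝ => ∑ i, ∑ j,
        ψ (‖(U * NormedSpace.exp (t • A)) i j‖ ^ 2))
      (2 * ∑ r ∈ Finset.filter (fun r => 0 < r)
          ((Finset.univ : Finset (Fin N × Fin N)).image fun p => ‖U p.1 p.2‖),
        r * derivWithin ψ (Set.Ici 0) (r ^ 2) *
          (Matrix.trace ((colorComp U r)ᴴ * U * A)).re)
      0 := by
  have hf := HasDerivAt.fun_sum (u := .univ) fun i _ =>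
    HasDerivAt.fun_sum (u := .univ) fun j _ =>
      hψ.hasDerivAt_comp_norm_sq (hasDerivAt_mul_exp_smul_apply U A i j)
  have hF : ∀ i j, U i j ≠ 0 → ‖U i j‖ ∈ Finset.filter (fun r => 0 < r)
      ((Finset.univ : Finset (Fin N × Fin N)).image fun p => ‖U p.1 p.2‖) := fun i j h =>
    Finset.mem_filter.2 ⟨Finset.mem_image_of_mem _ (Finset.mem_univ (i, j)), norm_pos_iff.2 h⟩
  refine hf.congr_deriv ?_
  simp only [zero_smul, NormedSpace.exp_zero, mul_one, Matrix.mul_assoc,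
    sum_mul_re_trace_colorComp U (U * A) (fun r => derivWithin ψ (Set.Ici 0) (r ^ 2)) hF,
    Finset.mul_sum, mul_left_comm (2 : ℝ)]

/-- For `ψ : [0,∞) → ℝ` differentiable, `U ∈ U(N)` unitary and `A`
anti-hermitian, the derivative at `t = 0` of `f(t) = ∑_{i,j} ψ(|(U·exp(tA))_{ij}|²)`
equals `2·∑_{r>0} r·ψ'(r²)·Re[Tr(U_r*·U·A)]`, the sum running over the finitely many
values `r > 0` occurring as moduli of entries of `U`. -/
theorem stmt8 (N : ℕ) (ψ : ℝ → ℝ) (hψ : DifferentiableOn ℝ ψ (Set.Ici 0))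
    (U : Matrix (Fin N) (Fin N) ℂ) (hU : U ∈ Matrix.unitaryGroup (Fin N) ℂ)
    (A : Matrix (Fin N) (Fin N) ℂ) (hA : Aᴴ = -A) :
    HasDerivAt
      (fun t : ℝ => ∑ i, ∑ j,
        ψ (‖(U * NormedSpace.exp (t • A)) i j‖ ^ 2))
      (2 * ∑ r ∈ Finset.filter (fun r => 0 < r)
          ((Finset.univ : Finset (Fin N × Fin N)).image fun p => ‖U p.1 p.2‖),
        r * derivWithin ψ (Set.Ici 0) (r ^ 2) *
          (Matrix.trace ((colorComp U r)ᴴ * U * A)).re)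
      0 :=
  stmt8_general N ψ hψ U A
end

section
/- Let U ∈ U(N) be unitary with all entries nonzero, set S_{ij} = sgn(U_{ij}), and let A ∈ M_N(ℂ) be anti-hermitian. Then the second derivative at t = 0 of f(t) = ‖U·exp(tA)‖₁ = Σ_{i,j} |(U·exp(tA))_{ij}| equals f''(0) = Re[Tr(S*·U·A²)] + Σ_{i,j} (Im[(UA)_{ij}·conj(S_{ij})])² / |U_{ij}|. -/
/-!
Near `t = 0` every entry `z(t) = (U exp(tA))ᵢⱼ` is nonzero, so `|z|` is differentiable there with
`|z|' = Re(z' z̄)/|z|`. Differentiating once more, the quotient rule gives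
`(Re(z'' z̄) + |z'|²)/|z| - Re(z' z̄)²/|z|³`, and Lagrange's identity
`|z'|²|z|² = Re(z' z̄)² + Im(z' z̄)²` turns this into `Re(z'' sgn z̄) + Im(z' sgn z̄)²/|z|`.
At `t = 0` we have `z' = (UA)ᵢⱼ` and `z'' = (UA²)ᵢⱼ`, and summing `Re((UA²)ᵢⱼ conj Sᵢⱼ)` over all
entries gives `Re Tr(S* U A²)`.
-/

open scoped Matrix ComplexConjugate

open Filter Topology
open scoped RealInnerProductSpace

theorem HasDerivAt.norm {F : Type*} [NormedAddCommGroup F] [InnerProductSpace ℝ F]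
    {f : ℝ → F} {f' : F} {x : ℝ} (hf : HasDerivAt f f' x) (h0 : f x ≠ 0) :
    HasDerivAt (‖f ·‖) (⟪f x, f'⟫ / ‖f x‖) x := by
  have h := hf.norm_sq.sqrt (by positivity)
  simp only [Real.sqrt_sq (norm_nonneg _)] at h
  convert h using 1
  field_simp

theorem eventually_hasDerivAt_norm {z z' : ℝ → ℂ} {x : ℝ}
    (hz : ∀ᶠ t in 𝓝 x, HasDerivAt z (z' t) t) (h0 : z x ≠ 0) :
    ∀ᶠ t in 𝓝 x, HasDerivAt (‖z ·‖) ((z' t * conj (z t)).re / ‖z t‖) t := by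
  filter_upwards [hz, hz.self_of_nhds.continuousAt.eventually_ne h0] with t hzt hzt0
  simpa only [Complex.inner] using HasDerivAt.norm hzt hzt0

theorem Complex.re_mul_conj_sq_add_im_mul_conj_sq (z w : ℂ) :
    (w * conj z).re ^ 2 + (w * conj z).im ^ 2 = ‖w‖ ^ 2 * ‖z‖ ^ 2 := by
  rw [← mul_pow, ← Complex.norm_conj z, ← norm_mul, Complex.sq_norm, Complex.normSq_apply]
  ring

theorem hasDerivAt_deriv_norm {z z' : ℝ → ℂ} {w : ℂ} {x : ℝ}
    (hz : ∀ᶠ t in 𝓝 x, HasDerivAt z (z' t) t) (hz' : HasDerivAt z' w x) (h0 : z x ≠ 0) :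
    HasDerivAt (deriv (‖z ·‖))
      ((w * conj (csgn (z x))).re + (z' x * conj (csgn (z x))).im ^ 2 / ‖z x‖) x := by
  have hnum : HasDerivAt (fun t => (z' t * conj (z t)).re)
      ((w * conj (z x) + z' x * conj (z' x)).re) x :=
    Complex.reCLM.hasFDerivAt.comp_hasDerivAt x (hz'.mul hz.self_of_nhds.star)
  have hquot := hnum.div (eventually_hasDerivAt_norm hz h0).self_of_nhds (by simpa using h0)
  refine (hquot.congr_of_eventuallyEq ((eventually_hasDerivAt_norm hz h0).mono
    fun t ht => ht.deriv)).congr_deriv ?_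
  have hpos : 0 < ‖z x‖ := norm_pos_iff.2 h0
  have lagrange := Complex.re_mul_conj_sq_add_im_mul_conj_sq (z x) (z' x)
  simp only [csgn, map_div₀, Complex.conj_ofReal, ← mul_div_assoc, Complex.div_ofReal_re,
    Complex.div_ofReal_im, Complex.add_re, Complex.mul_conj, Complex.ofReal_re, ← Complex.sq_norm]
  field_simp
  rw [mul_comm (conj (z x)) (z' x)]
  linear_combination -lagrange

theorem hasDerivAt_deriv_finset_sum {ι 𝕜 F : Type*} [NontriviallyNormedField 𝕜]
    [NormedAddCommGroup F] [NormedSpace 𝕜 F] {s : Finset ι} {f : ι → 𝕜 → F} {v : ι → F} {x : 𝕜}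
    (hf : ∀ i ∈ s, ∀ᶠ t in 𝓝 x, DifferentiableAt 𝕜 (f i) t)
    (h : ∀ i ∈ s, HasDerivAt (deriv (f i)) (v i) x) :
    HasDerivAt (deriv fun t => ∑ i ∈ s, f i t) (∑ i ∈ s, v i) x :=
  (HasDerivAt.fun_sum h).congr_of_eventuallyEq <|
    ((Filter.eventually_all_finset s).2 hf).mono fun _ ht => deriv_fun_sum ht

theorem Matrix.re_trace_conjTranspose_mul {m n : Type*} [Fintype m] [Fintype n]
    (S M : Matrix m n ℂ) :
    (trace (Sᴴ * M)).re = ∑ i, ∑ j, (M i j * conj (S i j)).re := by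
  simp only [trace, diag_apply, mul_apply, conjTranspose_apply, Complex.re_sum, Complex.star_def,
    mul_comm (conj _)]
  exact Finset.sum_comm

section

-- Any norm inducing the entrywise topology would do; this one makes matrices a normed `ℝ`-algebra.
attribute [local instance] Matrix.linftyOpNormedRing Matrix.linftyOpNormedAlgebra

theorem Matrix.hasDerivAt_mul_exp_smul_mul_apply {n : Type*} [Fintype n] [DecidableEq n]
    (B A C : Matrix n n ℂ) (i j : n) (t : ℝ) :
    HasDerivAt (fun s : ℝ => (B * NormedSpace.exp (s • A) * C) i j)
      ((B * NormedSpace.exp (t • A) * A * C) i j) t := by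
  have h := ((hasDerivAt_exp_smul_const (𝕂 := ℝ) A t).const_mul B).mul_const C
  rw [← mul_assoc] at h
  exact (Matrix.entryLinearMap ℝ ℂ i j).toContinuousLinearMap.hasFDerivAt.comp_hasDerivAt t h

end

theorem stmt10_general (N : ℕ) (U : Matrix (Fin N) (Fin N) ℂ)
    (hne : ∀ i j, U i j ≠ 0)
    (S : Matrix (Fin N) (Fin N) ℂ) (hS : S = Matrix.of fun i j => csgn (U i j))
    (A : Matrix (Fin N) (Fin N) ℂ) :
    HasDerivAt
      (deriv (fun t : ℝ => ∑ i, ∑ j,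
        ‖(U * NormedSpace.exp (t • A)) i j‖))
      ((Matrix.trace (Sᴴ * U * (A * A))).re +
        ∑ i, ∑ j, (((U * A) i j * conj (S i j)).im) ^ 2 / ‖U i j‖)
      0 := by
  have hz : ∀ i j, ∀ᶠ t in 𝓝 (0 : ℝ), HasDerivAt (fun s : ℝ => (U * NormedSpace.exp (s • A)) i j)
      ((U * NormedSpace.exp (t • A) * A) i j) t := fun i j => .of_forall fun t => by
    simpa using Matrix.hasDerivAt_mul_exp_smul_mul_apply U A 1 i j t
  have hz0 : ∀ i j, (U * NormedSpace.exp ((0 : ℝ) • A)) i j ≠ 0 := by simpa using hne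
  have hentry : ∀ i j, HasDerivAt (deriv fun t : ℝ => ‖(U * NormedSpace.exp (t • A)) i j‖)
      (((U * A * A) i j * conj (S i j)).re + ((U * A) i j * conj (S i j)).im ^ 2 / ‖U i j‖) 0 := by
    intro i j
    simpa [hS] using hasDerivAt_deriv_norm (hz i j)
      (Matrix.hasDerivAt_mul_exp_smul_mul_apply U A A i j 0) (hz0 i j)
  rw [Matrix.mul_assoc, ← Matrix.mul_assoc U, Matrix.re_trace_conjTranspose_mul]
  simp only [← Finset.sum_add_distrib, ← Fintype.sum_prod_type']
  exact hasDerivAt_deriv_finset_sum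
    (fun p _ => (eventually_hasDerivAt_norm (hz p.1 p.2) (hz0 p.1 p.2)).mono
      fun _ h => h.differentiableAt)
    (fun p _ => hentry p.1 p.2)

/-- For `U ∈ U(N)` with nonzero entries, `S_{ij} = sgn(U_{ij})` and `A`
anti-hermitian, the second derivative at `t = 0` of `f(t) = ‖U·exp(tA)‖₁` equals
`Re[Tr(S*·U·A²)] + ∑_{i,j} (Im[(UA)_{ij}·conj S_{ij}])² / |U_{ij}|`. -/
theorem stmt10 (N : ℕ) (U : Matrix (Fin N) (Fin N) ℂ)
    (hU : U ∈ Matrix.unitaryGroup (Fin N) ℂ) (hne : ∀ i j, U i j ≠ 0)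
    (S : Matrix (Fin N) (Fin N) ℂ) (hS : S = Matrix.of fun i j => csgn (U i j))
    (A : Matrix (Fin N) (Fin N) ℂ) (hA : Aᴴ = -A) :
    HasDerivAt
      (deriv (fun t : ℝ => ∑ i, ∑ j,
        ‖(U * NormedSpace.exp (t • A)) i j‖))
      ((Matrix.trace (Sᴴ * U * (A * A))).re +
        ∑ i, ∑ j, (((U * A) i j * conj (S i j)).im) ^ 2 / ‖U i j‖)
      0 :=
  stmt10_general N U hne S hS A
end

section
/- Let N ≥ 1 and let U ∈ O(N) be a circulant symmetric orthogonal matrix with nonzero entries, U_{ij} = γ_{j−i} (indices mod N), γ_i ≠ 0 for all i. Let e = 1 if N is odd and e = 0 if N is even. Let F = (1/√N)(w^{ij})_{i,j=0}^{N−1} with w = e^{2πi/N} be the rescaled Fourier matrix, and consider the finite set of circulant symmetric orthogonal matrices B = F·diag(β)·F* with β ∈ {±1}^N satisfying β_i = β_{−i} (indices mod N). Then the average of Φ(U,B) over this set (uniform probability) equals N·Σ_i |γ_i| − (1/|γ₀| + (1−e)/|γ_{N/2}| + ((N−2+e)/N)·Σ_i 1/|γ_i|), where the term (1−e)/|γ_{N/2}|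 is present only when N is even. -/
open scoped Matrix ComplexConjugate

/-- `Φ(U,B) = Tr(S*·U·B²) − ∑_{i,j} (Re[(UB)_{ij}·conj S_{ij}])²/|U_{ij}|`,
where `S_{ij} = sgn(U_{ij})`. -/
noncomputable def Phi {N : ℕ} (U B : Matrix (Fin N) (Fin N) ℂ) : ℝ :=
  (Matrix.trace ((Matrix.of fun i j => csgn (U i j))ᴴ * U * (B * B))).re -
    ∑ i, ∑ j, (((U * B) i j * conj (csgn (U i j))).re) ^ 2 / ‖U i j‖

/-- the rescaled Fourier matrix `F = (1/√N)(w^{ij})`, `w = e^{2πi/N}`. -/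
noncomputable def FourierMat (N : ℕ) : Matrix (Fin N) (Fin N) ℂ :=
  Matrix.of fun i j =>
    Complex.exp (2 * Real.pi * Complex.I * (i : ℕ) * (j : ℕ) / N) / Real.sqrt N

/-!
Conjugation by the unitary Fourier matrix `F` diagonalises circulant matrices:
`U = F diag(λ) F*` with `λ = dft γ`, and `U` real, symmetric and orthogonal forces
`λₖ = λ₋ₖ = ±1`. For `B = F diag(β) F*` this gives `B² = 1` and makes `UB = F diag(λβ) F*` real,
so the trace term of `Φ(U,B)` is `∑ |U_{ij}| = N ∑ |γᵢ|`, while the other term involves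
`(UB)ᵢⱼ² = (∑ₖ βₖ cₖ)²` with `cₖ = λₖ ω^{k(i-j)} / N`. Over the symmetric sign patterns, `βₖ βₗ`
averages to `[l = ±k]`, which leaves `(N [2(j-i) = 0] + #{k | 2k ≠ 0}) / N²`; the solutions of
`2d = 0` in `ℤ/N` are `0` and, for even `N`, `N/2`.
-/

open Finset Matrix ComplexConjugate Fin.CommRing

lemma ZMod.finEquiv_apply {N : ℕ} [NeZero N] (a : Fin N) :
    ZMod.finEquiv N a = (a.val : ZMod N) := by
  rw [← map_natCast (ZMod.finEquiv N), Fin.cast_val_eq_self]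

namespace Fin

variable {N : ℕ} [NeZero N]

noncomputable def stdAddChar (N : ℕ) [NeZero N] : AddChar (Fin N) ℂ :=
  ZMod.stdAddChar.compAddMonoidHom (ZMod.finEquiv N).toAddMonoidHom

lemma stdAddChar_apply (a : Fin N) : stdAddChar N a = ZMod.stdAddChar (ZMod.finEquiv N a) := rfl

lemma stdAddChar_mul_eq_exp (a b : Fin N) :
    stdAddChar N (a * b) = Complex.exp (2 * Real.pi * Complex.I * (a : ℕ) * (b : ℕ) / N) := by
  have h := ZMod.stdAddChar_coe (N := N) ((a : ℕ) * (b : ℕ) : ℕ)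
  push_cast at h
  rw [stdAddChar_apply, map_mul, ZMod.finEquiv_apply, ZMod.finEquiv_apply, h,
    mul_assoc _ (a : ℂ)]

lemma sum_stdAddChar_mul (a : Fin N) :
    ∑ k, stdAddChar N (k * a) = if a = 0 then (N : ℂ) else 0 := by
  have h := AddChar.sum_mulShift (ZMod.finEquiv N a) (ZMod.isPrimitive_stdAddChar N)
  rw [← (ZMod.finEquiv N).toEquiv.sum_comp] at h
  simpa [stdAddChar, ZMod.card] using h

lemma add_self_eq_zero_iff (d : Fin N) : d + d = 0 ↔ (d : ℕ) = 0 ∨ 2 * (d : ℕ) = N := by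
  rw [Fin.ext_iff, Fin.val_add, Fin.val_zero]
  have hd := d.isLt
  rcases lt_or_ge ((d : ℕ) + d) N with h | h
  · rw [Nat.mod_eq_of_lt h]
    omega
  · rw [Nat.mod_eq_sub_mod h, Nat.mod_eq_of_lt (by omega)]
    omega

lemma filter_add_self_eq_zero :
    univ.filter (fun d : Fin N => d + d = 0) = if N % 2 = 1 then {0} else
      {0, ⟨N / 2, Nat.div_lt_self (Nat.pos_of_neZero N) one_lt_two⟩} := by
  ext d
  simp only [mem_filter, mem_univ, true_and, add_self_eq_zero_iff]
  split_ifs <;> simp only [mem_insert, mem_singleton, Fin.ext_iff, Fin.val_zero] <;> omega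

lemma sum_filter_add_self_eq_zero {M : Type*} [AddCommMonoid M] (f : Fin N → M) :
    ∑ d ∈ univ.filter (fun d : Fin N => d + d = 0), f d = f 0 +
      if N % 2 = 1 then 0 else f ⟨N / 2, Nat.div_lt_self (Nat.pos_of_neZero N) one_lt_two⟩ := by
  rw [filter_add_self_eq_zero]
  split_ifs
  · rw [sum_singleton, add_zero]
  · refine sum_pair fun h => ?_
    have := Nat.pos_of_neZero N
    rw [Fin.ext_iff, Fin.val_zero, Fin.val_mk] at h
    omega

end Fin

lemma sum_sum_sub_eq_card_nsmul {G M : Type*} [AddGroup G] [Fintype G] [AddCommMonoid M]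
    (f : G → M) : ∑ i, ∑ j, f (j - i) = Fintype.card G • ∑ d, f d := by
  rw [sum_congr rfl fun i _ =>
      Fintype.sum_equiv (Equiv.subRight i) (fun j => f (j - i)) f fun _ => rfl,
    sum_const, card_univ]

section SignPatterns

variable {G : Type*} [AddGroup G] [Fintype G] [DecidableEq G]

def boolSign (b : Bool) : ℂ := if b then 1 else -1

lemma boolSign_mul_self (b : Bool) : boolSign b * boolSign b = 1 := by
  cases b <;> simp [boolSign]

lemma conj_boolSign (b : Bool) : conj (boolSign b) = boolSign b := by
  cases b <;> simp [boolSign]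

variable (G) in
def evenSignPatterns : Finset (G → Bool) := univ.filter fun b => ∀ i, b i = b (-i)

lemma mem_evenSignPatterns {b : G → Bool} : b ∈ evenSignPatterns G ↔ ∀ i, b i = b (-i) := by
  simp [evenSignPatterns]

def flipAt (k : G) (b : G → Bool) : G → Bool := fun i => if i = k ∨ i = -k then !b i else b i

lemma sum_boolSign_mul_boolSign (k l : G) :
    ∑ b ∈ evenSignPatterns G, boolSign (b k) * boolSign (b l)
      = if l = k ∨ l = -k then ((evenSignPatterns G).card : ℂ) else 0 := by
  split_ifs with hl
  · rw [card_eq_sum_ones, Nat.cast_sum, Nat.cast_one]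
    refine sum_congr rfl fun b hb => ?_
    obtain rfl | rfl := hl
    · exact boolSign_mul_self _
    · rw [← mem_evenSignPatterns.mp hb k, boolSign_mul_self]
  · push Not at hl
    refine sum_involution (fun b _ => flipAt k b) (fun b _ => ?_) (fun b _ _ h => ?_)
      (fun b hb => ?_) (fun b _ => ?_)
    · have hk : flipAt k b k = !b k := if_pos (Or.inl rfl)
      have hl' : flipAt k b l = b l := if_neg (not_or.mpr hl)
      rw [hk, hl']
      cases b k <;> cases b l <;> norm_num [boolSign]
    · simpa [flipAt] using congrFun h k
    · rw [mem_evenSignPatterns] at hb ⊢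
      intro i
      have hiff : (-i = k ∨ -i = -k) ↔ (i = k ∨ i = -k) := by
        rw [neg_eq_iff_eq_neg, neg_inj]
        exact or_comm
      simp only [flipAt, hiff, ← hb i]
    · funext i
      by_cases h : i = k ∨ i = -k <;> simp [flipAt, h]

lemma sum_ite_eq_or_eq_neg {M : Type*} [AddCommMonoid M] (f : G → M) (k : G) :
    ∑ l, (if l = k ∨ l = -k then f l else 0) = f k + if -k = k then 0 else f (-k) := by
  rw [← sum_filter, show univ.filter (fun l => l = k ∨ l = -k) = {k, -k} by ext; simp]
  split_ifs with h
  · rw [h, pair_eq_singleton, sum_singleton, add_zero]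
  · exact sum_pair (Ne.symm h)

lemma sum_sum_boolSign_mul_sq (c : G → ℂ) :
    ∑ b ∈ evenSignPatterns G, (∑ k, boolSign (b k) * c k) ^ 2
      = (evenSignPatterns G).card * ∑ k, (c k * c k + if -k = k then 0 else c k * c (-k)) := by
  have hexpand : ∀ b : G → Bool, (∑ k, boolSign (b k) * c k) ^ 2
      = ∑ k, ∑ l, boolSign (b k) * boolSign (b l) * (c k * c l) := fun b => by
    rw [sq, sum_mul_sum]
    exact sum_congr rfl fun _ _ => sum_congr rfl fun _ _ => by ring
  simp only [hexpand]
  rw [sum_comm]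
  simp only [mul_sum]
  refine sum_congr rfl fun k _ => ?_
  rw [sum_comm]
  simp only [← sum_mul, sum_boolSign_mul_boolSign, ite_mul, zero_mul]
  rw [sum_ite_eq_or_eq_neg (fun l => ((evenSignPatterns G).card : ℂ) * (c k * c l))]
  split_ifs <;> ring

end SignPatterns

lemma conj_csgn_mul_self (z : ℂ) : conj (csgn z) * z = ‖z‖ := by
  rcases eq_or_ne z 0 with rfl | hz
  · simp
  · rw [csgn, map_div₀, Complex.conj_ofReal, div_mul_eq_mul_div, Complex.conj_mul', sq,
      mul_div_assoc, div_self (by exact_mod_cast norm_ne_zero_iff.mpr hz), mul_one]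

lemma re_mul_conj_csgn_ofReal_sq_div (z : ℂ) (x : ℝ) :
    (z * conj (csgn x)).re ^ 2 / ‖(x : ℂ)‖ = z.re ^ 2 / |x| := by
  rw [Complex.norm_real, Real.norm_eq_abs]
  rcases eq_or_ne x 0 with rfl | hx
  · simp
  · have hsgn : csgn x = ((x / |x| : ℝ) : ℂ) := by
      rw [csgn, Complex.norm_real, Real.norm_eq_abs, Complex.ofReal_div]
    rw [hsgn, Complex.conj_ofReal, Complex.re_mul_ofReal, mul_pow, div_pow, sq_abs,
      div_self (pow_ne_zero 2 hx), mul_one]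

lemma Phi_map_ofReal {n : ℕ} (W : Matrix (Fin n) (Fin n) ℝ) {B : Matrix (Fin n) (Fin n) ℂ}
    (hB : B * B = 1) :
    Phi (W.map fun x => (x : ℂ)) B = ∑ i, ∑ j, |W i j|
      - ∑ i, ∑ j, ((W.map (fun x => (x : ℂ)) * B) i j).re ^ 2 / |W i j| := by
  have hdiag : ∀ i, ((of fun i j => csgn (W i j : ℂ))ᴴ
      * W.map (fun x => (x : ℂ))) i i = ∑ j, ((|W j i| : ℝ) : ℂ) := fun i => by
    rw [mul_apply]
    refine sum_congr rfl fun j _ => ?_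
    rw [conjTranspose_apply, of_apply, map_apply, Complex.star_def, conj_csgn_mul_self,
      Complex.norm_real, Real.norm_eq_abs]
  simp only [Phi, hB, Matrix.mul_one, trace, diag_apply, hdiag, Complex.re_sum,
    Complex.ofReal_re, map_apply, re_mul_conj_csgn_ofReal_sq_div]
  rw [sum_comm]

section Fourier

variable {N : ℕ} [NeZero N]

lemma FourierMat_apply (i j : Fin N) :
    FourierMat N i j = Fin.stdAddChar N (i * j) / Real.sqrt N := by
  rw [FourierMat, of_apply, Fin.stdAddChar_mul_eq_exp]

variable (N) in
noncomputable def fourierMultiplier (d : Fin N → ℂ) : Matrix (Fin N) (Fin N) ℂ :=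
  FourierMat N * diagonal d * (FourierMat N)ᴴ

lemma fourierMultiplier_apply (d : Fin N → ℂ) (i j : Fin N) :
    fourierMultiplier N d i j = (N : ℂ)⁻¹ * ∑ k, d k * Fin.stdAddChar N (k * (i - j)) := by
  have hsqrt : (Real.sqrt N : ℂ) * Real.sqrt N = N := by
    rw [← Complex.ofReal_mul, Real.mul_self_sqrt (Nat.cast_nonneg N), Complex.ofReal_natCast]
  rw [fourierMultiplier, mul_apply, mul_sum]
  simp only [mul_diagonal, conjTranspose_apply]
  refine sum_congr rfl fun k _ => ?_
  rw [FourierMat_apply, FourierMat_apply, star_div₀, Complex.star_def, Complex.conj_ofReal,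
    ← AddChar.map_neg_eq_conj, show k * (i - j) = i * k + -(j * k) by ring,
    AddChar.map_add_eq_mul, ← hsqrt]
  ring

lemma FourierMat_mul_conjTranspose_self : FourierMat N * (FourierMat N)ᴴ = 1 := by
  have h : fourierMultiplier N 1 = 1 := by
    ext i j
    simp only [fourierMultiplier_apply, Pi.one_apply, one_mul, Fin.sum_stdAddChar_mul, sub_eq_zero,
      one_apply]
    split_ifs <;> simp [NeZero.ne]
  rwa [fourierMultiplier, Pi.one_def, diagonal_one, Matrix.mul_one] at h

lemma conjTranspose_FourierMat_mul_self : (FourierMat N)ᴴ * FourierMat N = 1 :=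
  mul_eq_one_comm.mp FourierMat_mul_conjTranspose_self

lemma fourierMultiplier_mul (d d' : Fin N → ℂ) :
    fourierMultiplier N d * fourierMultiplier N d' = fourierMultiplier N (d * d') := by
  simp only [fourierMultiplier, Matrix.mul_assoc]
  rw [← Matrix.mul_assoc (FourierMat N)ᴴ, conjTranspose_FourierMat_mul_self, Matrix.one_mul,
    ← Matrix.mul_assoc (diagonal d), diagonal_mul_diagonal]
  rfl

lemma fourierMultiplier_eq_one_iff {d : Fin N → ℂ} : fourierMultiplier N d = 1 ↔ d = 1 := by
  refine ⟨fun h => ?_, fun h => ?_⟩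
  · have hd : diagonal d = (FourierMat N)ᴴ * fourierMultiplier N d * FourierMat N := by
      simp only [fourierMultiplier, ← Matrix.mul_assoc, conjTranspose_FourierMat_mul_self,
        Matrix.one_mul]
      rw [Matrix.mul_assoc, conjTranspose_FourierMat_mul_self, Matrix.mul_one]
    rw [h, Matrix.mul_one, conjTranspose_FourierMat_mul_self] at hd
    exact diagonal_injective (hd.trans diagonal_one.symm)
  · rw [fourierMultiplier, h, Pi.one_def, diagonal_one, Matrix.mul_one,
      FourierMat_mul_conjTranspose_self]

lemma conj_fourierMultiplier_apply {d : Fin N → ℂ} (hd : ∀ k, conj (d k) = d (-k))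
    (i j : Fin N) : conj (fourierMultiplier N d i j) = fourierMultiplier N d i j := by
  rw [fourierMultiplier_apply, map_mul, map_inv₀, map_natCast, map_sum,
    ← Equiv.sum_comp (Equiv.neg (Fin N))]
  congr 1
  refine sum_congr rfl fun k _ => ?_
  rw [map_mul, ← AddChar.map_neg_eq_conj, Equiv.neg_apply, hd, neg_mul, neg_neg, neg_neg]

noncomputable def dft (g : Fin N → ℂ) (k : Fin N) : ℂ := ∑ d, g d * Fin.stdAddChar N (d * k)

lemma fourierMultiplier_dft (g : Fin N → ℂ) :
    fourierMultiplier N (dft g) = of fun i j => g (j - i) := by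
  ext i j
  have hN : (N : ℂ) ≠ 0 := NeZero.ne _
  simp only [fourierMultiplier_apply, dft, sum_mul, mul_assoc, ← AddChar.map_add_eq_mul]
  rw [sum_comm]
  simp only [← mul_sum, show ∀ d k : Fin N, d * k + k * (i - j) = k * (d + (i - j)) from
    fun _ _ => by ring, Fin.sum_stdAddChar_mul, add_eq_zero_iff_eq_neg, neg_sub, mul_ite, mul_zero,
    sum_ite_eq', mem_univ, if_true, of_apply]
  field_simp

lemma conj_dft (g : Fin N → ℂ) (k : Fin N) :
    conj (dft g k) = dft (fun d => conj (g d)) (-k) := by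
  simp only [dft, map_sum, map_mul, ← AddChar.map_neg_eq_conj, mul_neg]

lemma sum_fourierMultiplier_boolSign_sq {Λ : Fin N → ℂ} (hsq : ∀ k, Λ k * Λ k = 1)
    (heven : ∀ k, Λ (-k) = Λ k) (i j : Fin N) :
    ∑ b ∈ evenSignPatterns (Fin N), fourierMultiplier N (fun k => Λ k * boolSign (b k)) i j ^ 2
      = (evenSignPatterns (Fin N)).card * ((if (j - i) + (j - i) = 0 then (N : ℂ) else 0) + N
          - (univ.filter fun k : Fin N => k + k = 0).card) / N ^ 2 := by
  have hN : (N : ℂ) ≠ 0 := NeZero.ne _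
  set c : Fin N → ℂ := fun k => (N : ℂ)⁻¹ * Λ k * Fin.stdAddChar N (k * (i - j))
  have hentry : ∀ b : Fin N → Bool,
      fourierMultiplier N (fun k => Λ k * boolSign (b k)) i j = ∑ k, boolSign (b k) * c k := by
    intro b
    rw [fourierMultiplier_apply, mul_sum]
    exact sum_congr rfl fun k _ => by ring
  have hdiag : ∀ k, c k * c k = (N : ℂ)⁻¹ ^ 2 * Fin.stdAddChar N (k * ((i - j) + (i - j))) := by
    intro k
    rw [mul_add, AddChar.map_add_eq_mul]
    linear_combination ((N : ℂ)⁻¹ * Fin.stdAddChar N (k * (i - j))) ^ 2 * hsq k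
  have hanti : ∀ k, c k * c (-k) = (N : ℂ)⁻¹ ^ 2 := by
    intro k
    have : Fin.stdAddChar N (k * (i - j)) * Fin.stdAddChar N (-k * (i - j)) = 1 := by
      rw [← AddChar.map_add_eq_mul, neg_mul, add_neg_cancel, AddChar.map_zero_eq_one]
    simp only [c, heven]
    linear_combination (N : ℂ)⁻¹ ^ 2 * (Λ k * Λ k * this + hsq k)
  have hterm : ∀ k, c k * c k + (if -k = k then 0 else c k * c (-k))
      = (N : ℂ)⁻¹ ^ 2 * (Fin.stdAddChar N (k * ((i - j) + (i - j))) + 1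
          - if k + k = 0 then 1 else 0) := by
    intro k
    simp only [hdiag, hanti, neg_eq_iff_add_eq_zero]
    split_ifs with hk
    · rw [show k * ((i - j) + (i - j)) = (k + k) * (i - j) by ring, hk, zero_mul,
        AddChar.map_zero_eq_one]
      ring
    · ring
  have hcond : (i - j) + (i - j) = 0 ↔ (j - i) + (j - i) = 0 := by
    rw [← neg_sub j i, ← neg_add, neg_eq_zero]
  simp only [hentry, sum_sum_boolSign_mul_sq, hterm, hcond, ← mul_sum, sum_sub_distrib,
    sum_add_distrib, Fin.sum_stdAddChar_mul, sum_boole, sum_const,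
    card_univ, Fintype.card_fin, nsmul_eq_mul, mul_one]
  field_simp

lemma sum_re_fourierMultiplier_boolSign_sq {Λ : Fin N → ℂ} (hsq : ∀ k, Λ k * Λ k = 1)
    (hconj : ∀ k, conj (Λ k) = Λ (-k)) (i j : Fin N) :
    ∑ b ∈ evenSignPatterns (Fin N),
        (fourierMultiplier N (fun k => Λ k * boolSign (b k)) i j).re ^ 2
      = (evenSignPatterns (Fin N)).card * ((if (j - i) + (j - i) = 0 then (N : ℝ) else 0) + N
          - (univ.filter fun k : Fin N => k + k = 0).card) / N ^ 2 := by
  have hreal : ∀ k, conj (Λ k) = Λ k := fun k => by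
    rcases mul_self_eq_one_iff.mp (hsq k) with h | h <;> simp [h]
  have hre : ∀ b ∈ evenSignPatterns (Fin N),
      (fourierMultiplier N (fun k => Λ k * boolSign (b k)) i j).re ^ 2
        = (fourierMultiplier N (fun k => Λ k * boolSign (b k)) i j ^ 2).re := by
    intro b hb
    have hz := conj_fourierMultiplier_apply (d := fun k => Λ k * boolSign (b k)) (fun k => by
      rw [map_mul, hconj, conj_boolSign, ← mem_evenSignPatterns.mp hb k]) i j
    calc _ = (((fourierMultiplier N (fun k => Λ k * boolSign (b k)) i j).re : ℂ) ^ 2).re := by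
          rw [← Complex.ofReal_pow, Complex.ofReal_re]
      _ = _ := by rw [Complex.conj_eq_iff_re.mp hz]
  have heven : ∀ k, Λ (-k) = Λ k := fun k => (hconj k).symm.trans (hreal k)
  rw [sum_congr rfl hre, ← Complex.re_sum, sum_fourierMultiplier_boolSign_sq hsq heven]
  split_ifs <;> norm_cast

lemma sum_weighted_re_fourierMultiplier_boolSign_sq {Λ : Fin N → ℂ} (hsq : ∀ k, Λ k * Λ k = 1)
    (hconj : ∀ k, conj (Λ k) = Λ (-k)) (g : Fin N → ℝ) :
    ∑ b ∈ evenSignPatterns (Fin N), ∑ i, ∑ j,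
        (fourierMultiplier N (fun k => Λ k * boolSign (b k)) i j).re ^ 2 * g (j - i)
      = (evenSignPatterns (Fin N)).card * (g 0
          + (if N % 2 = 1 then 0 else g ⟨N / 2, Nat.div_lt_self (Nat.pos_of_neZero N) one_lt_two⟩)
          + (N - 2 + if N % 2 = 1 then 1 else 0) / N * ∑ d, g d) := by
  have hN : (N : ℝ) ≠ 0 := NeZero.ne _
  have hcard : ((univ.filter fun k : Fin N => k + k = 0).card : ℝ)
      = 1 + if N % 2 = 1 then 0 else 1 := by
    rw [card_eq_sum_ones, Nat.cast_sum, Fin.sum_filter_add_self_eq_zero]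
    split_ifs <;> simp
  rw [sum_comm, sum_congr rfl fun i _ => sum_comm]
  simp only [← sum_mul, sum_re_fourierMultiplier_boolSign_sq hsq hconj]
  rw [sum_sum_sub_eq_card_nsmul (fun d => (evenSignPatterns (Fin N)).card
    * ((if d + d = 0 then (N : ℝ) else 0) + N - (univ.filter fun k : Fin N => k + k = 0).card)
    / N ^ 2 * g d)]
  simp only [add_sub_assoc, add_div, add_mul, mul_add, sum_add_distrib, ite_div, zero_div,
    ite_mul, zero_mul, mul_ite, mul_zero]
  rw [← sum_filter, Fin.sum_filter_add_self_eq_zero, hcard,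
    Fintype.card_fin, nsmul_eq_mul, ← mul_sum]
  split_ifs <;> field_simp <;> ring

variable {U : Matrix (Fin N) (Fin N) ℝ} {γ : Fin N → ℝ}

lemma map_ofReal_eq_fourierMultiplier_dft (hcirc : ∀ i j, U i j = γ (j - i)) :
    U.map (fun x => (x : ℂ)) = fourierMultiplier N (dft fun d => (γ d : ℂ)) := by
  rw [fourierMultiplier_dft]
  ext i j
  rw [map_apply, of_apply, hcirc]

lemma dft_mul_self_eq_one (hUO : Uᵀ * U = 1) (hUs : U.IsSymm) (hcirc : ∀ i j, U i j = γ (j - i))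
    (k : Fin N) : dft (fun d => (γ d : ℂ)) k * dft (fun d => (γ d : ℂ)) k = 1 := by
  rw [hUs.eq] at hUO
  have hUU : U.map (fun x => (x : ℂ)) * U.map (fun x => (x : ℂ)) = 1 :=
    calc _ = (U * U).map Complex.ofRealHom := Matrix.map_mul.symm
      _ = 1 := by rw [hUO, Matrix.map_one _ (map_zero _) (map_one _)]
  rw [map_ofReal_eq_fourierMultiplier_dft hcirc, fourierMultiplier_mul,
    fourierMultiplier_eq_one_iff] at hUU
  exact congrFun hUU k

lemma conj_dft_ofReal (γ : Fin N → ℝ) (k : Fin N) :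
    conj (dft (fun d => (γ d : ℂ)) k) = dft (fun d => (γ d : ℂ)) (-k) := by
  simp only [conj_dft, Complex.conj_ofReal]

lemma Phi_map_ofReal_fourierMultiplier_boolSign (hcirc : ∀ i j, U i j = γ (j - i))
    (b : Fin N → Bool) :
    Phi (U.map fun x => (x : ℂ)) (fourierMultiplier N fun k => boolSign (b k))
      = N * ∑ d, |γ d| - ∑ i, ∑ j, (fourierMultiplier N
          (fun k => dft (fun d => (γ d : ℂ)) k * boolSign (b k)) i j).re ^ 2 * |γ (j - i)|⁻¹ := by
  have hBB : (fourierMultiplier N fun k => boolSign (b k))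
      * (fourierMultiplier N fun k => boolSign (b k)) = 1 := by
    rw [fourierMultiplier_mul, fourierMultiplier_eq_one_iff]
    exact funext fun k => boolSign_mul_self (b k)
  rw [Phi_map_ofReal U hBB, map_ofReal_eq_fourierMultiplier_dft hcirc, fourierMultiplier_mul]
  simp only [hcirc, sum_sum_sub_eq_card_nsmul (fun d => |γ d|), Fintype.card_fin, nsmul_eq_mul,
    div_eq_mul_inv]
  rfl

end Fourier

theorem stmt18_general (N : ℕ) (hN : 0 < N) (γ : Fin N → ℝ)
    (U : Matrix (Fin N) (Fin N) ℝ) (hUO : Uᵀ * U = 1) (hUs : U.IsSymm)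
    (hcirc : ∀ i j, U i j = γ (j - i))
    (e : ℝ) (he : e = if N % 2 = 1 then 1 else 0)
    (T : Finset (Fin N → Bool))
    (hT : T = Finset.univ.filter fun b : Fin N → Bool => ∀ i, b i = b (-i))
    (Bmat : (Fin N → Bool) → Matrix (Fin N) (Fin N) ℂ)
    (hB : Bmat = fun b =>
      FourierMat N *
        Matrix.diagonal (fun i => if b i then (1 : ℂ) else -1) * (FourierMat N)ᴴ) :
    (T.card : ℝ)⁻¹ * ∑ b ∈ T, Phi (U.map fun x => (x : ℂ)) (Bmat b) =
      N * (∑ i, |γ i|) -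
        (1 / |γ ⟨0, hN⟩| + (1 - e) / |γ ⟨N / 2, Nat.div_lt_self hN one_lt_two⟩| +
          (N - 2 + e) / N * ∑ i, 1 / |γ i|) := by
  have : NeZero N := ⟨hN.ne'⟩
  obtain rfl : T = evenSignPatterns (Fin N) := by
    ext b
    simp [hT, evenSignPatterns]
  obtain rfl : Bmat = fun b => fourierMultiplier N fun k => boolSign (b k) := hB
  have hS : ((evenSignPatterns (Fin N)).card : ℝ) ≠ 0 := by
    exact_mod_cast (card_pos.mpr ⟨fun _ => true, by simp [mem_evenSignPatterns]⟩).ne'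
  simp only [Phi_map_ofReal_fourierMultiplier_boolSign hcirc]
  rw [sum_sub_distrib, sum_const, sum_weighted_re_fourierMultiplier_boolSign_sq
      (dft_mul_self_eq_one hUO hUs hcirc) (conj_dft_ofReal γ) fun d => |γ d|⁻¹,
    nsmul_eq_mul, ← mul_sub, ← mul_assoc, inv_mul_cancel₀ hS, one_mul, he]
  split_ifs <;> simp

/-- For a circulant symmetric orthogonal `U ∈ O(N)` with nonzero
entries `U_{ij} = γ_{j−i}`, the average of `Φ(U,B)` over the finite set of circulant
symmetric orthogonal matrices `B = F·diag(β)·F*`, `β ∈ {±1}^N` with `β_i = β_{−i}`,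
equals `N·∑|γ_i| − (1/|γ₀| + (1−e)/|γ_{N/2}| + ((N−2+e)/N)·∑ 1/|γ_i|)`,
where `e` is the parity of `N`. -/
theorem stmt18 (N : ℕ) (hN : 0 < N) (γ : Fin N → ℝ) (hγ : ∀ i, γ i ≠ 0)
    (U : Matrix (Fin N) (Fin N) ℝ) (hUO : Uᵀ * U = 1) (hUs : U.IsSymm)
    (hcirc : ∀ i j, U i j = γ (j - i))
    (e : ℝ) (he : e = if N % 2 = 1 then 1 else 0)
    (T : Finset (Fin N → Bool))
    (hT : T = Finset.univ.filter fun b : Fin N → Bool => ∀ i, b i = b (-i))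
    (Bmat : (Fin N → Bool) → Matrix (Fin N) (Fin N) ℂ)
    (hB : Bmat = fun b =>
      FourierMat N *
        Matrix.diagonal (fun i => if b i then (1 : ℂ) else -1) * (FourierMat N)ᴴ) :
    (T.card : ℝ)⁻¹ * ∑ b ∈ T, Phi (U.map fun x => (x : ℂ)) (Bmat b) =
      N * (∑ i, |γ i|) -
        (1 / |γ ⟨0, hN⟩| + (1 - e) / |γ ⟨N / 2, Nat.div_lt_self hN one_lt_two⟩| +
          (N - 2 + e) / N * ∑ i, 1 / |γ i|) :=
  stmt18_general N hN γ U hUO hUs hcirc e he T hT Bmat hB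
end
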